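/- Every positive completely alternating sequence is log completely alternating: if (δ_n) is completely alternating with δ_n > 0 for all n, then (ln δ_n) is completely alternating. -/

import Mathlib

noncomputable def nabla (φ : ℕ → ℝ) : ℕ → ℝ := fun n => φ n - φ (n + 1)

def CompletelyAlternating (ψ : ℕ → ℝ) : Prop :=
  ∀ k : ℕ, 1 ≤ k → ∀ n : ℕ, (nabla^[k] ψ) n ≤ 0

def CompletelyMonotone (φ : ℕ → ℝ) : Prop :=
  ∀ k n : ℕ, 0 ≤ (nabla^[k] φ) n

lemma nabla_add (φ ψ : ℕ → ℝ) (k : ℕ) :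
    nabla^[k] (fun n => φ n + ψ n) = fun n => nabla^[k] φ n + nabla^[k] ψ n := by
  induction k generalizing φ ψ with
  | zero => rfl
  | succ k ih =>
    rw [Function.iterate_succ_apply]
    have h1 : nabla (fun n => φ n + ψ n) = fun n => nabla φ n + nabla ψ n := by
      funext n; simp only [nabla]; ring
    rw [h1, ih]
    funext n
    rw [Function.iterate_succ_apply, Function.iterate_succ_apply]

lemma nabla_neg (φ : ℕ → ℝ) (k : ℕ) :
    nabla^[k] (fun n => -(φ n)) = fun n => -(nabla^[k] φ n) := by
  induction k generalizing φ with
  | zero => rfl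
  | succ k ih =>
    rw [Function.iterate_succ_apply]
    have h1 : nabla (fun n => -(φ n)) = fun n => -(nabla φ n) := by
      funext n; simp only [nabla]; ring
    rw [h1, ih]
    funext n
    rw [Function.iterate_succ_apply]

lemma nabla_const_mul (c : ℝ) (φ : ℕ → ℝ) (k : ℕ) :
    nabla^[k] (fun n => c * φ n) = fun n => c * nabla^[k] φ n := by
  induction k generalizing φ with
  | zero => rfl
  | succ k ih =>
    rw [Function.iterate_succ_apply]
    have h1 : nabla (fun n => c * φ n) = fun n => c * nabla φ n := by
      funext n; simp only [nabla]; ring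
    rw [h1, ih]
    funext n
    rw [Function.iterate_succ_apply]

lemma nabla_shift (φ : ℕ → ℝ) (k : ℕ) :
    nabla^[k] (fun n => φ (n + 1)) = fun n => nabla^[k] φ (n + 1) := by
  induction k generalizing φ with
  | zero => rfl
  | succ k ih =>
    rw [Function.iterate_succ_apply]
    have h1 : nabla (fun n => φ (n + 1)) = fun n => nabla φ (n + 1) := by
      funext n; simp only [nabla]
    rw [h1, ih]
    funext n
    rw [Function.iterate_succ_apply]

lemma nabla_sum {ι : Type*} (s : Finset ι) (F : ι → ℕ → ℝ) (k : ℕ) :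
    nabla^[k] (fun n => ∑ i ∈ s, F i n) = fun n => ∑ i ∈ s, nabla^[k] (F i) n := by
  induction k generalizing F with
  | zero => rfl
  | succ k ih =>
    rw [Function.iterate_succ_apply]
    have h1 : nabla (fun n => ∑ i ∈ s, F i n) = fun n => ∑ i ∈ s, nabla (F i) n := by
      funext n; simp only [nabla]; rw [← Finset.sum_sub_distrib]
    rw [h1, ih]
    funext n
    refine Finset.sum_congr rfl fun i _ => ?_
    rw [Function.iterate_succ_apply]

/-- Product closure for complete monotonicity up to level `m`. -/
lemma nabla_mul_nonneg : ∀ (m : ℕ) (φ ψ : ℕ → ℝ),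
    (∀ j ≤ m, ∀ n, 0 ≤ nabla^[j] φ n) → (∀ j ≤ m, ∀ n, 0 ≤ nabla^[j] ψ n) →
    ∀ n, 0 ≤ nabla^[m] (fun n => φ n * ψ n) n := by
  intro m
  induction m with
  | zero =>
    intro φ ψ hφ hψ n
    exact mul_nonneg (hφ 0 le_rfl n) (hψ 0 le_rfl n)
  | succ m ih =>
    intro φ ψ hφ hψ n
    have h1 : nabla (fun n => φ n * ψ n)
        = fun n => (fun n => nabla φ n * ψ n) n + (fun n => φ (n + 1) * nabla ψ n) n := by
      funext n; simp only [nabla]; ring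
    have h2 : nabla^[m+1] (fun n => φ n * ψ n) n
        = nabla^[m] (fun n => nabla φ n * ψ n) n + nabla^[m] (fun n => φ (n+1) * nabla ψ n) n := by
      rw [Function.iterate_succ_apply, h1]
      exact congrFun (nabla_add _ _ m) n
    rw [h2]
    have hA : ∀ n, 0 ≤ nabla^[m] (fun n => nabla φ n * ψ n) n := by
      refine ih (nabla φ) ψ ?_ (fun j hj => hψ j (by omega))
      intro j hj n'
      have := hφ (j+1) (by omega) n'
      rwa [Function.iterate_succ_apply] at this
    have hB : ∀ n, 0 ≤ nabla^[m] (fun n => φ (n+1) * nabla ψ n) n := by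
      refine ih (fun n => φ (n+1)) (nabla ψ) ?_ ?_
      · intro j hj n'
        have := hφ j (by omega) (n'+1)
        rw [nabla_shift]
        exact this
      · intro j hj n'
        have := hψ (j+1) (by omega) n'
        rwa [Function.iterate_succ_apply] at this
    linarith [hA n, hB n]

/-- Inverse of a positive completely alternating sequence is completely monotone. -/
lemma inv_nabla_nonneg : ∀ (k : ℕ) (δ : ℕ → ℝ), (∀ n, 0 < δ n) → CompletelyAlternating δ →
    ∀ j ≤ k, ∀ n, 0 ≤ nabla^[j] (fun n => (δ n)⁻¹) n := by
  intro k
  induction k with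
  | zero =>
    intro δ hpos hca j hj n
    interval_cases j
    exact inv_nonneg.mpr (hpos n).le
  | succ k ih =>
    intro δ hpos hca j hj n
    rcases Nat.lt_succ_iff_lt_or_eq.mp (Nat.lt_succ_of_le hj) with hlt | rfl
    · exact ih δ hpos hca j (by omega) n
    · have h1 : nabla (fun n => (δ n)⁻¹)
          = fun n => (fun n => δ (n+1) - δ n) n *
              ((fun n => (δ n)⁻¹) n * (fun n => (δ (n+1))⁻¹) n) := by
        funext n
        simp only [nabla]
        rw [inv_sub_inv (hpos n).ne' (hpos (n+1)).ne']
        field_simp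
      have h2 : nabla^[k+1] (fun n => (δ n)⁻¹) n
          = nabla^[k] (fun n => (δ (n+1) - δ n) * ((δ n)⁻¹ * (δ (n+1))⁻¹)) n := by
        rw [Function.iterate_succ_apply, h1]
      rw [h2]
      have hg : ∀ j ≤ k, ∀ n, 0 ≤ nabla^[j] (fun n => δ (n+1) - δ n) n := by
        intro j hj n'
        have heq : (fun n => δ (n+1) - δ n) = fun n => -(nabla δ n) := by
          funext n; simp [nabla]
        rw [heq, nabla_neg]
        have := hca (j+1) (by omega) n'
        rw [Function.iterate_succ_apply] at this
        show 0 ≤ -nabla^[j] (nabla δ) n'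
        linarith
      have hSca : CompletelyAlternating (fun n => δ (n+1)) := by
        intro k' hk' n'
        rw [nabla_shift]
        exact hca k' hk' (n'+1)
      have hinv2 : ∀ j ≤ k, ∀ n, 0 ≤ nabla^[j] (fun n => (δ n)⁻¹ * (δ (n+1))⁻¹) n := by
        intro j hj
        refine nabla_mul_nonneg j _ _ (fun j' hj' => ih δ hpos hca j' (by omega)) ?_
        intro j' hj' n'
        exact ih (fun n => δ (n+1)) (fun n => hpos (n+1)) hSca j' (by omega) n'
      exact nabla_mul_nonneg k _ _ hg hinv2 n

lemma tendsto_nabla {φ : ℕ → ℕ → ℝ} {Φ : ℕ → ℝ}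
    (h : ∀ n, Filter.Tendsto (fun m => φ m n) Filter.atTop (nhds (Φ n))) (k : ℕ) :
    ∀ n, Filter.Tendsto (fun m => nabla^[k] (φ m) n) Filter.atTop (nhds (nabla^[k] Φ n)) := by
  induction k with
  | zero => exact h
  | succ k ih =>
    intro n
    have hrw : ∀ (ψ : ℕ → ℝ), nabla^[k+1] ψ n = nabla^[k] ψ n - nabla^[k] ψ (n+1) := by
      intro ψ; rw [Function.iterate_succ_apply']; rfl
    simp only [hrw]
    exact (ih n).sub (ih (n+1))

lemma log_diff_le {x y : ℝ} (hx : 0 < x) (hxy : x ≤ y) :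
    Real.log y - Real.log x ≤ (y - x) / x := by
  have hy : 0 < y := lt_of_lt_of_le hx hxy
  have h := Real.log_le_sub_one_of_pos (div_pos hy hx)
  rw [Real.log_div hy.ne' hx.ne'] at h
  have : y / x - 1 = (y - x) / x := by field_simp
  linarith [this ▸ h]

lemma le_log_diff {x y : ℝ} (hx : 0 < x) (hxy : x ≤ y) :
    (y - x) / y ≤ Real.log y - Real.log x := by
  have hy : 0 < y := lt_of_lt_of_le hx hxy
  have h := Real.log_le_sub_one_of_pos (div_pos hx hy)
  rw [Real.log_div hx.ne' hy.ne'] at h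
  have : x / y - 1 = -((y - x) / y) := by field_simp; ring
  linarith [this ▸ h]

lemma g_nabla_nonneg (δ : ℕ → ℝ) (hca : CompletelyAlternating δ) :
    ∀ j n, 0 ≤ nabla^[j] (fun n => δ (n+1) - δ n) n := by
  intro j n
  have heq : (fun n => δ (n + 1) - δ n) = fun n => -(nabla δ n) := by
    funext n; simp [nabla]
  rw [heq, nabla_neg]
  have := hca (j+1) (by omega) n
  rw [Function.iterate_succ_apply] at this
  show 0 ≤ -nabla^[j] (nabla δ) n
  linarith

lemma ca_combo (δ : ℕ → ℝ) (hca : CompletelyAlternating δ) (t : ℝ) (ht0 : 0 ≤ t) (ht1 : t ≤ 1) :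
    CompletelyAlternating (fun n => (1 - t) * δ n + t * δ (n+1)) := by
  intro k hk n
  have h1 : nabla^[k] (fun n => (1 - t) * δ n + t * δ (n+1)) n
      = (1 - t) * nabla^[k] δ n + t * nabla^[k] δ (n+1) := by
    have h2 := congrFun (nabla_add (fun n => (1-t) * δ n) (fun n => t * δ (n+1)) k) n
    rw [nabla_const_mul, nabla_const_mul t (fun n => δ (n+1)) k, nabla_shift] at h2
    exact h2
  rw [h1]
  have ha := hca k hk n
  have hb := hca k hk (n+1)
  have h3 : (1 - t) * nabla^[k] δ n ≤ 0 := mul_nonpos_of_nonneg_of_nonpos (by linarith) ha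
  have h4 : t * nabla^[k] δ (n+1) ≤ 0 := mul_nonpos_of_nonneg_of_nonpos ht0 hb
  linarith

lemma riemann_log (a G : ℝ) (ha : 0 < a) (hG : 0 ≤ G) :
    Filter.Tendsto (fun m : ℕ => ∑ i ∈ Finset.range (m+1),
      (((m:ℝ)+1)⁻¹ * (G * (a + ((i:ℝ)/((m:ℝ)+1)) * G)⁻¹)))
      Filter.atTop (nhds (Real.log (a + G) - Real.log a)) := by
  set L := Real.log (a + G) - Real.log a with hL
  have key : ∀ m : ℕ, L ≤ (∑ i ∈ Finset.range (m+1),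
        (((m:ℝ)+1)⁻¹ * (G * (a + ((i:ℝ)/((m:ℝ)+1)) * G)⁻¹)))
      ∧ (∑ i ∈ Finset.range (m+1),
        (((m:ℝ)+1)⁻¹ * (G * (a + ((i:ℝ)/((m:ℝ)+1)) * G)⁻¹)))
        ≤ L + (G * a⁻¹) * ((m:ℝ)+1)⁻¹ := by
    intro m
    set M : ℝ := (m:ℝ) + 1 with hM
    have hMpos : 0 < M := by positivity
    set u : ℕ → ℝ := fun i => a + ((i:ℝ)/M) * G with hu
    have hupos : ∀ i, 0 < u i := by
      intro i
      have : 0 ≤ ((i:ℝ)/M) * G := mul_nonneg (div_nonneg (Nat.cast_nonneg i) hMpos.le) hG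
      simp only [hu]; linarith
    have hdiff : ∀ i : ℕ, u (i+1) - u i = G / M := by
      intro i
      simp only [hu]
      push_cast
      field_simp
      ring
    have humono : ∀ i, u i ≤ u (i+1) := by
      intro i
      have h2 : 0 ≤ G / M := div_nonneg hG hMpos.le
      have h3 : 0 ≤ u (i+1) - u i := (hdiff i) ▸ h2
      linarith
    have hu0 : u 0 = a := by simp [hu]
    have huM : u (m+1) = a + G := by
      simp only [hu]
      push_cast
      rw [div_self (by positivity : M ≠ 0)]
      ring
    have hLsum : L = ∑ i ∈ Finset.range (m+1), (Real.log (u (i+1)) - Real.log (u i)) := by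
      rw [Finset.sum_range_sub (fun i => Real.log (u i)), hu0, huM]
    have h_up : ∀ i, Real.log (u (i+1)) - Real.log (u i) ≤ M⁻¹ * (G * (u i)⁻¹) := by
      intro i
      have h := log_diff_le (hupos i) (humono i)
      have e : (u (i+1) - u i) / u i = M⁻¹ * (G * (u i)⁻¹) := by
        rw [hdiff i]; ring
      linarith [e ▸ h]
    have h_lo : ∀ i, M⁻¹ * (G * (u (i+1))⁻¹) ≤ Real.log (u (i+1)) - Real.log (u i) := by
      intro i
      have h := le_log_diff (hupos i) (humono i)
      have e : (u (i+1) - u i) / u (i+1) = M⁻¹ * (G * (u (i+1))⁻¹) := by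
        rw [hdiff i]; ring
      linarith [e ▸ h]
    constructor
    · rw [hLsum]
      exact Finset.sum_le_sum (fun i _ => h_up i)
    · have step : ∀ i ∈ Finset.range (m+1), M⁻¹ * (G * (u i)⁻¹)
          ≤ (Real.log (u (i+1)) - Real.log (u i))
            + (M⁻¹ * (G * (u i)⁻¹) - M⁻¹ * (G * (u (i+1))⁻¹)) := by
        intro i _
        have := h_lo i
        linarith
      calc (∑ i ∈ Finset.range (m+1), M⁻¹ * (G * (u i)⁻¹))
          ≤ ∑ i ∈ Finset.range (m+1), ((Real.log (u (i+1)) - Real.log (u i))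
            + (M⁻¹ * (G * (u i)⁻¹) - M⁻¹ * (G * (u (i+1))⁻¹))) := Finset.sum_le_sum step
        _ = L + (M⁻¹ * (G * (u 0)⁻¹) - M⁻¹ * (G * (u (m+1))⁻¹)) := by
            rw [Finset.sum_add_distrib, Finset.sum_range_sub (fun i => Real.log (u i)),
              Finset.sum_range_sub' (fun i => M⁻¹ * (G * (u i)⁻¹)), hu0, huM, hLsum,
              Finset.sum_range_sub (fun i => Real.log (u i)), hu0, huM]
        _ ≤ L + (G * a⁻¹) * M⁻¹ := by
            rw [hu0]
            have h1 : 0 ≤ M⁻¹ * (G * (u (m+1))⁻¹) :=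
              mul_nonneg (by positivity) (mul_nonneg hG (inv_nonneg.mpr (hupos (m+1)).le))
            have h2 : M⁻¹ * (G * a⁻¹) = (G * a⁻¹) * M⁻¹ := by ring
            linarith
  have hub : Filter.Tendsto (fun m : ℕ => L + (G * a⁻¹) * ((m:ℝ)+1)⁻¹)
      Filter.atTop (nhds L) := by
    have h0 : Filter.Tendsto (fun m : ℕ => ((m:ℝ)+1)⁻¹) Filter.atTop (nhds 0) := by
      simpa [one_div] using (tendsto_one_div_add_atTop_nhds_zero_nat :
        Filter.Tendsto (fun n : ℕ => 1 / ((n:ℝ) + 1)) Filter.atTop (nhds 0))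
    have h1 : Filter.Tendsto (fun _ : ℕ => L) Filter.atTop (nhds L) := tendsto_const_nhds
    have := h1.add (h0.const_mul (G * a⁻¹))
    simpa using this
  exact tendsto_of_tendsto_of_tendsto_of_le_of_le tendsto_const_nhds hub
    (fun m => (key m).1) (fun m => (key m).2)

theorem stmt19 (δ : ℕ → ℝ) (hpos : ∀ n, 0 < δ n) (h : CompletelyAlternating δ) :
    CompletelyAlternating (fun n => Real.log (δ n)) := by
  have hmono : ∀ n, δ n ≤ δ (n+1) := by
    intro n
    have := h 1 le_rfl n
    simp only [Function.iterate_one, nabla] at this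
    linarith
  have hgnn : ∀ n, 0 ≤ δ (n+1) - δ n := fun n => by linarith [hmono n]
  -- the family of Riemann sums
  have hψCM : ∀ m k n, 0 ≤ nabla^[k] (fun n => ∑ i ∈ Finset.range (m+1),
      (((m:ℝ)+1)⁻¹ * ((δ (n+1) - δ n) *
        (((1:ℝ) - (i:ℝ)/((m:ℝ)+1)) * δ n + ((i:ℝ)/((m:ℝ)+1)) * δ (n+1))⁻¹))) n := by
    intro m k n
    have hsum : nabla^[k] (fun n => ∑ i ∈ Finset.range (m+1),
        (((m:ℝ)+1)⁻¹ * ((δ (n+1) - δ n) *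
          (((1:ℝ) - (i:ℝ)/((m:ℝ)+1)) * δ n + ((i:ℝ)/((m:ℝ)+1)) * δ (n+1))⁻¹))) n
        = ∑ i ∈ Finset.range (m+1), nabla^[k] (fun n =>
          (((m:ℝ)+1)⁻¹ * ((δ (n+1) - δ n) *
            (((1:ℝ) - (i:ℝ)/((m:ℝ)+1)) * δ n + ((i:ℝ)/((m:ℝ)+1)) * δ (n+1))⁻¹))) n :=
      congrFun (nabla_sum (Finset.range (m+1)) (fun i n =>
        (((m:ℝ)+1)⁻¹ * ((δ (n+1) - δ n) *
          (((1:ℝ) - (i:ℝ)/((m:ℝ)+1)) * δ n + ((i:ℝ)/((m:ℝ)+1)) * δ (n+1))⁻¹))) k) n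
    rw [hsum]
    apply Finset.sum_nonneg
    intro i hi
    have him : i ≤ m := Nat.lt_succ_iff.mp (Finset.mem_range.mp hi)
    set t : ℝ := (i:ℝ)/((m:ℝ)+1) with htdef
    have ht0 : 0 ≤ t := div_nonneg (Nat.cast_nonneg i) (by positivity)
    have ht1 : t ≤ 1 := by
      rw [htdef, div_le_one (by positivity)]
      have : (i:ℝ) ≤ (m:ℝ) := Nat.cast_le.mpr him
      linarith
    have hc : nabla^[k] (fun n =>
        (((m:ℝ)+1)⁻¹ * ((δ (n+1) - δ n) * (((1:ℝ) - t) * δ n + t * δ (n+1))⁻¹))) n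
        = ((m:ℝ)+1)⁻¹ * nabla^[k] (fun n =>
          ((δ (n+1) - δ n) * (((1:ℝ) - t) * δ n + t * δ (n+1))⁻¹)) n :=
      congrFun (nabla_const_mul ((m:ℝ)+1)⁻¹ (fun n =>
        ((δ (n+1) - δ n) * (((1:ℝ) - t) * δ n + t * δ (n+1))⁻¹)) k) n
    rw [hc]
    refine mul_nonneg (by positivity) ?_
    have hEpos : ∀ n, 0 < (1 - t) * δ n + t * δ (n+1) := by
      intro n
      have h1 : t * δ n ≤ t * δ (n+1) := mul_le_mul_of_nonneg_left (hmono n) ht0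
      have h2 : 0 < (1 - t) * δ n + t * δ n := by
        have : (1 - t) * δ n + t * δ n = δ n := by ring
        rw [this]; exact hpos n
      linarith
    have hEca : CompletelyAlternating (fun n => (1 - t) * δ n + t * δ (n+1)) :=
      ca_combo δ h t ht0 ht1
    refine nabla_mul_nonneg k _ _ (fun j _ => g_nabla_nonneg δ h j) ?_ n
    intro j hj n'
    exact inv_nabla_nonneg k (fun n => (1 - t) * δ n + t * δ (n+1)) hEpos hEca j hj n'
  -- the limit
  have htend : ∀ n, Filter.Tendsto (fun m : ℕ => ∑ i ∈ Finset.range (m+1),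
      (((m:ℝ)+1)⁻¹ * ((δ (n+1) - δ n) *
        (((1:ℝ) - (i:ℝ)/((m:ℝ)+1)) * δ n + ((i:ℝ)/((m:ℝ)+1)) * δ (n+1))⁻¹)))
      Filter.atTop (nhds (Real.log (δ (n+1)) - Real.log (δ n))) := by
    intro n
    have hr := riemann_log (δ n) (δ (n+1) - δ n) (hpos n) (hgnn n)
    have e1 : δ n + (δ (n+1) - δ n) = δ (n+1) := by ring
    rw [e1] at hr
    have e2 : (fun m : ℕ => ∑ i ∈ Finset.range (m+1),
        (((m:ℝ)+1)⁻¹ * ((δ (n+1) - δ n) *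
          (((1:ℝ) - (i:ℝ)/((m:ℝ)+1)) * δ n + ((i:ℝ)/((m:ℝ)+1)) * δ (n+1))⁻¹)))
        = (fun m : ℕ => ∑ i ∈ Finset.range (m+1),
        (((m:ℝ)+1)⁻¹ * ((δ (n+1) - δ n) *
          (δ n + ((i:ℝ)/((m:ℝ)+1)) * (δ (n+1) - δ n))⁻¹))) := by
      funext m
      refine Finset.sum_congr rfl fun i _ => ?_
      congr 2
      ring
    rw [e2]
    exact hr
  have hΦCM : ∀ k n, 0 ≤ nabla^[k] (fun n => Real.log (δ (n+1)) - Real.log (δ n)) n := by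
    intro k n
    exact ge_of_tendsto (tendsto_nabla htend k n)
      (Filter.Eventually.of_forall fun m => hψCM m k n)
  intro k hk n
  obtain ⟨j, rfl⟩ : ∃ j, k = j + 1 := ⟨k - 1, by omega⟩
  have h1 : nabla (fun n => Real.log (δ n))
      = fun n => -((fun n => Real.log (δ (n+1)) - Real.log (δ n)) n) := by
    funext n
    simp only [nabla]
    ring
  have h2 : nabla^[j+1] (fun n => Real.log (δ n)) n
      = -(nabla^[j] (fun n => Real.log (δ (n+1)) - Real.log (δ n)) n) := by
    rw [Function.iterate_succ_apply, h1]
    exact congrFun (nabla_neg (fun n => Real.log (δ (n+1)) - Real.log (δ n)) j) n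
  rw [h2]
  linarith [hΦCM j n]
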